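/- Let d ≥ 1 and let ρ : ℝ^d → [0,∞) be a probability density with respect to Lebesgue measure with finite second moment M_2(ρ) := ∫_{ℝ^d} |x|² ρ(x) dx < ∞, and assume x ↦ ρ(x) log ρ(x) is Lebesgue integrable. Then for every δ > 0, ∫_{ℝ^d} ρ(x) log ρ(x) dx ≥ −(2π/δ)^{d/2} − δ M_2(ρ). -/

import Mathlib

open MeasureTheory

/-- Entropy lower bound: for a probability density `ρ` on `ℝ^d` with finite second moment
`M₂(ρ) = ∫ |x|² ρ(x) dx` and integrable entropy integrand, for every `δ > 0`,
`∫ ρ log ρ ≥ -(2π/δ)^{d/2} - δ M₂(ρ)`. (Here `Real.log 0 = 0`, so `ρ log ρ = 0` where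
`ρ = 0`.) -/
theorem stmt8 {d : ℕ} (hd : 1 ≤ d) (ρ : EuclideanSpace ℝ (Fin d) → ℝ)
    (hρ_meas : Measurable ρ) (hρ_nonneg : ∀ x, 0 ≤ ρ x)
    (hρ_prob : ∫ x, ρ x = 1)
    (hM2 : Integrable fun x => ‖x‖ ^ 2 * ρ x)
    (hent : Integrable fun x => ρ x * Real.log (ρ x)) :
    ∀ δ > (0:ℝ),
      -((2 * Real.pi / δ) ^ ((d : ℝ) / 2)) - δ * ∫ x, ‖x‖ ^ 2 * ρ x ≤
        ∫ x, ρ x * Real.log (ρ x) := by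
  intro δ hδ
  -- ρ is integrable (otherwise its integral would be 0, not 1)
  have hρ_int : Integrable ρ := by
    by_contra h
    rw [integral_undef h] at hρ_prob
    norm_num at hρ_prob
  -- the Gaussian is integrable
  have hgauss_int : Integrable
      (fun x : EuclideanSpace ℝ (Fin d) => Real.exp (-δ * ‖x‖ ^ 2)) := by
    have h := (GaussianFourier.integrable_cexp_neg_mul_sq_norm_add
      (V := EuclideanSpace ℝ (Fin d))
      (b := (δ : ℂ)) (by simpa using hδ) 0 (0 : EuclideanSpace ℝ (Fin d))).norm
    refine h.congr (Filter.Eventually.of_forall fun x => ?_)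
    simp [Complex.norm_exp, ← Complex.ofReal_pow]
  -- pointwise inequality: ρ - e^{-δ‖x‖²} ≤ ρ log ρ + δ‖x‖²ρ
  have hpt : ∀ x : EuclideanSpace ℝ (Fin d), ρ x - Real.exp (-δ * ‖x‖ ^ 2) ≤
      ρ x * Real.log (ρ x) + δ * (‖x‖ ^ 2 * ρ x) := by
    intro x
    rcases eq_or_lt_of_le (hρ_nonneg x) with h0 | h0
    · rw [← h0]
      simp
      positivity
    · have hb : (0:ℝ) < Real.exp (-δ * ‖x‖ ^ 2) := Real.exp_pos _
      have hlog : Real.log (Real.exp (-δ * ‖x‖ ^ 2) / ρ x) ≤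
          Real.exp (-δ * ‖x‖ ^ 2) / ρ x - 1 :=
        Real.log_le_sub_one_of_pos (div_pos hb h0)
      rw [Real.log_div (ne_of_gt hb) (ne_of_gt h0), Real.log_exp] at hlog
      have := mul_le_mul_of_nonneg_left hlog (le_of_lt h0)
      rw [mul_sub, mul_sub, mul_div_cancel₀ _ (ne_of_gt h0), mul_one] at this
      nlinarith
  -- integrate
  have hint_rhs : Integrable (fun x : EuclideanSpace ℝ (Fin d) =>
      ρ x * Real.log (ρ x) + δ * (‖x‖ ^ 2 * ρ x)) :=
    hent.add (hM2.const_mul δ)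
  have hint_lhs : Integrable (fun x : EuclideanSpace ℝ (Fin d) =>
      ρ x - Real.exp (-δ * ‖x‖ ^ 2)) :=
    hρ_int.sub hgauss_int
  have hmono := integral_mono hint_lhs hint_rhs hpt
  rw [integral_sub hρ_int hgauss_int, integral_add hent (hM2.const_mul δ),
    integral_const_mul, hρ_prob] at hmono
  have hgauss_val : ∫ x : EuclideanSpace ℝ (Fin d), Real.exp (-δ * ‖x‖ ^ 2)
      = (Real.pi / δ) ^ ((d : ℝ) / 2) := by
    have := GaussianFourier.integral_rexp_neg_mul_sq_norm
      (V := EuclideanSpace ℝ (Fin d)) hδ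
    simpa using this
  rw [hgauss_val] at hmono
  -- compare the constants
  have hcmp : (Real.pi / δ) ^ ((d : ℝ) / 2) ≤ (2 * Real.pi / δ) ^ ((d : ℝ) / 2) := by
    apply Real.rpow_le_rpow (by positivity) _ (by positivity)
    have := Real.pi_pos
    rw [div_le_div_iff₀ hδ hδ]
    nlinarith
  linarith
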